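/- Let l₂ : ℝ × ℝ → ℝ be defined by l₂(x, y) = (1/π)·arctan(4y(x − 1/2)) + 1/2. Then for every real x with x ≤ 1/4 and every real y > 0, one has 0 < l₂(x, y) < 1/y. -/
import Mathlib

/-- The function l₂(x, y) = (1/π)·arctan(4y(x − 1/2)) + 1/2. -/
noncomputable def l2 (x y : ℝ) : ℝ := (1 / Real.pi) * Real.arctan (4 * y * (x - 1 / 2)) + 1 / 2

lemma arctan_pos' {u : ℝ} (hu : 0 < u) : 0 < Real.arctan u := by
  have := Real.arctan_strictMono hu
  rwa [Real.arctan_zero] at this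

lemma arctan_lt_self {u : ℝ} (hu : 0 < u) : Real.arctan u < u := by
  have h1 : 0 < Real.arctan u := arctan_pos' hu
  have h2 := Real.arctan_lt_pi_div_two u
  have := Real.lt_tan h1 h2
  rwa [Real.tan_arctan] at this

/-- l₂(x,y) is always positive and is smaller than 1/y whenever x ≤ 1/4. -/
theorem l2_bound (x y : ℝ) (hx : x ≤ 1 / 4) (hy : 0 < y) :
    0 < l2 x y ∧ l2 x y < 1 / y := by
  have hπ := Real.pi_pos
  set s : ℝ := 4 * y * (1 / 2 - x) with hs
  have hspos : 0 < s := by nlinarith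
  have hsy : y ≤ s := by nlinarith
  have harg : 4 * y * (x - 1 / 2) = -s := by rw [hs]; ring
  have key : l2 x y = (1 / Real.pi) * Real.arctan s⁻¹ := by
    rw [l2, harg, Real.arctan_neg, Real.arctan_inv_of_pos hspos]
    field_simp
    ring
  constructor
  · rw [key]
    have := arctan_pos' (show (0:ℝ) < s⁻¹ by positivity)
    positivity
  · rw [key]
    have h1 : Real.arctan s⁻¹ < s⁻¹ := arctan_lt_self (by positivity)
    have h2 : s⁻¹ ≤ y⁻¹ := by
      apply inv_anti₀ hy hsy
    have hπ1 : 1 < Real.pi := by linarith [Real.pi_gt_three]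
    have : (1 / Real.pi) * Real.arctan s⁻¹ < 1 * y⁻¹ := by
      apply mul_lt_mul' _ (h1.trans_le h2) (arctan_pos' (by positivity)).le one_pos
      rw [div_le_one hπ]; linarith
    simpa [one_div] using this
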